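/- arXiv:2406.07083 — 3 statements merged into one kernel-verified Lean document; each statement's English description precedes it below -/
import Mathlib

section
/- MISELBO is a lower bound on the log marginal likelihood: for a positive joint density p(x, z) with marginal p(x) = ∫ p(x,z) dz, and probability densities q_1, …, q_A on the latent space, (1/A)∑_{a=1}^{A} E_{z ∼ q_a}[log(p(x,z)/((1/A)∑_{a'} q_{a'}(z)))] ≤ log p(x). -/
/-!
Write `Q` for the mixture `(1/A) ∑ₐ qₐ`, a probability density, and `S = ∫ p`. The MISELBO is
`∫ Q log (p / Q)`, and `log x ≤ x - 1` applied to `x = p / (S Q)` gives pointwise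
`Q log (p / Q) ≤ Q log S + p / S - Q`, whose right-hand side integrates to `log S`.
-/

open MeasureTheory Finset

theorem Real.mul_log_div_le {p q s : ℝ} (hp : 0 < p) (hq : 0 ≤ q) (hs : 0 < s) :
    q * Real.log (p / q) ≤ q * Real.log s + (p / s - q) := by
  rcases hq.eq_or_lt with rfl | hq
  · simp only [zero_mul, zero_add, sub_zero]
    positivity
  have hlog : Real.log (p / q) = Real.log (p / (s * q)) + Real.log s := by
    rw [← Real.log_mul (by positivity) hs.ne']
    congr 1
    field_simp
  calc q * Real.log (p / q) = q * Real.log s + q * Real.log (p / (s * q)) := by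
        rw [hlog]; ring
    _ ≤ q * Real.log s + q * (p / (s * q) - 1) := by
        gcongr
        exact Real.log_le_sub_one_of_pos (by positivity)
    _ = q * Real.log s + (p / s - q) := by
        field_simp

section Gibbs

variable {Z : Type*} [MeasurableSpace Z] {μ : Measure Z}

theorem integral_pos_of_pos_of_measure_ne_zero {p : Z → ℝ} (hp : ∀ z, 0 < p z)
    (hpInt : Integrable p μ) (hμ : μ ≠ 0) : 0 < ∫ z, p z ∂μ := by
  rw [integral_pos_iff_support_of_nonneg (fun z => (hp z).le) hpInt,
    Function.support_eq_univ fun z => (hp z).ne']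
  exact Measure.measure_univ_pos.mpr hμ

theorem integral_mul_log_div_le_log_integral {p Q : Z → ℝ} (hp : ∀ z, 0 < p z)
    (hpInt : Integrable p μ) (hQ : ∀ z, 0 ≤ Q z) (hQ1 : ∫ z, Q z ∂μ = 1)
    (hInt : Integrable (fun z => Q z * Real.log (p z / Q z)) μ) :
    ∫ z, Q z * Real.log (p z / Q z) ∂μ ≤ Real.log (∫ z, p z ∂μ) := by
  set S := ∫ z, p z ∂μ
  have hQInt : Integrable Q μ := Integrable.of_integral_ne_zero (by simp [hQ1])
  have hμ : μ ≠ 0 := by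
    rintro rfl
    simp at hQ1
  have hS : 0 < S := integral_pos_of_pos_of_measure_ne_zero hp hpInt hμ
  calc ∫ z, Q z * Real.log (p z / Q z) ∂μ
      ≤ ∫ z, (Q z * Real.log S + (p z / S - Q z)) ∂μ :=
        integral_mono hInt ((hQInt.mul_const _).add ((hpInt.div_const _).sub hQInt))
          fun z => Real.mul_log_div_le (hp z) (hQ z) hS
    _ = Real.log S := by
        have hQS : Integrable (fun z => Q z * Real.log S) μ := hQInt.mul_const _
        have hpQ : Integrable (fun z => p z / S - Q z) μ := (hpInt.div_const _).sub hQInt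
        rw [integral_add hQS hpQ, integral_sub (hpInt.div_const _) hQInt, integral_mul_const,
          integral_div, hQ1, div_self hS.ne']
        ring

end Gibbs

section Mixture

variable {Z ι : Type*} [MeasurableSpace Z] {μ : Measure Z} [Fintype ι]

theorem integral_const_mul_sum_mul {g : ι → Z → ℝ} {f : Z → ℝ}
    (hInt : ∀ i, Integrable (fun z => g i z * f z) μ) (c : ℝ) :
    c * ∑ i, ∫ z, g i z * f z ∂μ = ∫ z, (c * ∑ i, g i z) * f z ∂μ := by
  simp_rw [mul_assoc, Finset.sum_mul, integral_const_mul, integral_finsetSum _ fun i _ => hInt i]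

theorem integrable_const_mul_sum_mul {g : ι → Z → ℝ} {f : Z → ℝ}
    (hInt : ∀ i, Integrable (fun z => g i z * f z) μ) (c : ℝ) :
    Integrable (fun z => (c * ∑ i, g i z) * f z) μ := by
  simp_rw [mul_assoc, Finset.sum_mul]
  exact (integrable_finsetSum _ fun i _ => hInt i).const_mul c

end Mixture

theorem miselbo_le_log_marginal_general
    {Z : Type*} [MeasurableSpace Z] (μ : Measure Z)
    (A : ℕ) (hA : 0 < A)
    (p : Z → ℝ) (hp : ∀ z, 0 < p z) (hpInt : Integrable p μ)
    (q : Fin A → Z → ℝ)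
    (hq0 : ∀ a z, 0 < q a z) (hq1 : ∀ a, ∫ z, q a z ∂μ = 1)
    (hInt : ∀ a, Integrable
      (fun z => q a z * Real.log (p z / ((1 / (A : ℝ)) * ∑ a', q a' z))) μ) :
    (1 / (A : ℝ)) * ∑ a,
        ∫ z, q a z * Real.log (p z / ((1 / (A : ℝ)) * ∑ a', q a' z)) ∂μ
      ≤ Real.log (∫ z, p z ∂μ) := by
  have hqInt : ∀ a, Integrable (q a) μ := fun a => Integrable.of_integral_ne_zero (by simp [hq1])
  have hmix1 : ∫ z, (1 / (A : ℝ)) * ∑ a, q a z ∂μ = 1 := by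
    have hA' : (A : ℝ) ≠ 0 := by positivity
    rw [integral_const_mul, integral_finsetSum _ fun a _ => hqInt a]
    simp [hq1, hA']
  rw [integral_const_mul_sum_mul hInt]
  have hmix0 : ∀ z, 0 ≤ (1 / (A : ℝ)) * ∑ a, q a z := fun z =>
    mul_nonneg (by positivity) (sum_nonneg fun a _ => (hq0 a z).le)
  exact integral_mul_log_div_le_log_integral hp hpInt hmix0 hmix1
    (integrable_const_mul_sum_mul hInt _)

/-- MISELBO is a lower bound on the log marginal likelihood. -/
theorem miselbo_le_log_marginal
    {Z : Type*} [MeasurableSpace Z] (μ : Measure Z) [SigmaFinite μ]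
    (A : ℕ) (hA : 0 < A)
    (p : Z → ℝ) (hp : ∀ z, 0 < p z) (hpInt : Integrable p μ)
    (q : Fin A → Z → ℝ)
    (hq0 : ∀ a z, 0 < q a z) (hq1 : ∀ a, ∫ z, q a z ∂μ = 1)
    (hInt : ∀ a, Integrable
      (fun z => q a z * Real.log (p z / ((1 / (A : ℝ)) * ∑ a', q a' z))) μ) :
    (1 / (A : ℝ)) * ∑ a,
        ∫ z, q a z * Real.log (p z / ((1 / (A : ℝ)) * ∑ a', q a' z)) ∂μ
      ≤ Real.log (∫ z, p z ∂μ) :=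
  miselbo_le_log_marginal_general μ A hA p hp hpInt q hq0 hq1 hInt
end

section
/- The expected value of the Some-to-Some estimator is a lower bound on MISELBO: E_{Φ ∼ Unif(S-subsets of Fin A)}[(1/S)∑_{s ∈ Φ} E_{z ∼ q_{φ_s}}[log(p(x,z)/((1/S)∑_{k∈Φ} q_{φ_k}(z|x)))]] ≤ (1/A)∑_{a=1}^A E_{z ∼ q_{φ_a}}[log(p(x,z)/((1/A)∑_{a'} q_{φ_{a'}}(z|x)))]. -/
open MeasureTheory Finset

lemma aux_count (A S : ℕ) (hS : 1 ≤ S) (a : Fin A) :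
    ((powersetCard S (univ : Finset (Fin A))).filter fun Φ => a ∈ Φ).card
      = (A-1).choose (S-1) := by
  have : ((powersetCard S (univ : Finset (Fin A))).filter fun Φ => a ∈ Φ).card
      = (powersetCard (S-1) ((univ : Finset (Fin A)).erase a)).card := by
    apply Finset.card_bij (fun Φ _ => Φ.erase a)
    · intro Φ hΦ
      simp only [mem_filter, mem_powersetCard] at hΦ
      rw [mem_powersetCard]
      exact ⟨erase_subset_erase a hΦ.1.1, by rw [card_erase_of_mem hΦ.2, hΦ.1.2]⟩
    · intro Φ₁ h₁ Φ₂ h₂ h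
      simp only [mem_filter] at h₁ h₂
      rw [← insert_erase h₁.2, ← insert_erase h₂.2, h]
    · intro Ψ hΨ
      rw [mem_powersetCard] at hΨ
      have haΨ : a ∉ Ψ := fun h => (mem_erase.1 (hΨ.1 h)).1 rfl
      refine ⟨insert a Ψ, ?_, by rw [erase_insert haΨ]⟩
      simp only [mem_filter, mem_powersetCard]
      refine ⟨⟨subset_univ _, ?_⟩, mem_insert_self a Ψ⟩
      rw [card_insert_of_notMem haΨ, hΨ.2]
      omega
  rw [this, card_powersetCard, card_erase_of_mem (mem_univ a), card_univ, Fintype.card_fin]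

lemma aux_double_sum (A S : ℕ) (hS : 1 ≤ S) (F : Fin A → ℝ) :
    ∑ Φ ∈ powersetCard S (univ : Finset (Fin A)), ∑ s ∈ Φ, F s
      = ((A-1).choose (S-1) : ℝ) * ∑ a, F a := by
  have h1 : ∀ Φ ∈ powersetCard S (univ : Finset (Fin A)),
      ∑ s ∈ Φ, F s = ∑ s : Fin A, if s ∈ Φ then F s else 0 := by
    intro Φ _
    rw [Finset.sum_ite_mem, univ_inter]
  rw [Finset.sum_congr rfl h1, Finset.sum_comm]
  rw [Finset.mul_sum]
  refine Finset.sum_congr rfl fun a _ => ?_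
  rw [← Finset.sum_filter, Finset.sum_const, aux_count A S hS a]
  simp [nsmul_eq_mul]

lemma aux_kl {Z : Type*} [MeasurableSpace Z] (μ : Measure Z)
    (f g : Z → ℝ) (hf : ∀ z, 0 < f z) (hg : ∀ z, 0 < g z)
    (hfi : Integrable f μ) (hgi : Integrable g μ)
    (hf1 : ∫ z, f z ∂μ = 1) (hg1 : ∫ z, g z ∂μ = 1)
    (hint : Integrable (fun z => g z * Real.log (f z / g z)) μ) :
    ∫ z, g z * Real.log (f z / g z) ∂μ ≤ 0 := by
  have hpw : ∀ z, g z * Real.log (f z / g z) ≤ f z - g z := by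
    intro z
    have h1 : Real.log (f z / g z) ≤ f z / g z - 1 :=
      Real.log_le_sub_one_of_pos (div_pos (hf z) (hg z))
    have h2 : g z * (f z / g z - 1) = f z - g z := by
      rw [mul_sub, mul_div_cancel₀ _ (hg z).ne', mul_one]
    calc g z * Real.log (f z / g z) ≤ g z * (f z / g z - 1) :=
          mul_le_mul_of_nonneg_left h1 (hg z).le
      _ = f z - g z := h2
  calc ∫ z, g z * Real.log (f z / g z) ∂μ ≤ ∫ z, (f z - g z) ∂μ :=
        integral_mono hint (hfi.sub hgi) hpw
    _ = 0 := by rw [integral_sub hfi hgi, hf1, hg1, sub_self]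

/-- The expected value of the Some-to-Some estimator is a lower bound on MISELBO. -/
theorem s2s_expectation_le_miselbo
    {Z : Type*} [MeasurableSpace Z] (μ : Measure Z) [SigmaFinite μ]
    (A S : ℕ) (hS : 1 ≤ S) (hSA : S ≤ A)
    (p : Z → ℝ) (hp : ∀ z, 0 < p z)
    (q : Fin A → Z → ℝ)
    (hq0 : ∀ a z, 0 < q a z) (hq1 : ∀ a, ∫ z, q a z ∂μ = 1)
    (hIntA : ∀ a, Integrable
      (fun z => q a z * Real.log (p z / ((1 / (A : ℝ)) * ∑ a', q a' z))) μ)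
    (hIntS : ∀ Φ ∈ Finset.powersetCard S (Finset.univ : Finset (Fin A)), ∀ s,
      Integrable
        (fun z => q s z * Real.log (p z / ((1 / (S : ℝ)) * ∑ k ∈ Φ, q k z))) μ) :
    ∑ Φ ∈ Finset.powersetCard S (Finset.univ : Finset (Fin A)),
        (1 / (A.choose S : ℝ)) * ((1 / (S : ℝ)) *
          ∑ s ∈ Φ, ∫ z, q s z * Real.log (p z / ((1 / (S : ℝ)) * ∑ k ∈ Φ, q k z)) ∂μ)
      ≤ (1 / (A : ℝ)) * ∑ a,
          ∫ z, q a z * Real.log (p z / ((1 / (A : ℝ)) * ∑ a', q a' z)) ∂μ := by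
  have hA : 1 ≤ A := le_trans hS hSA
  have hA0 : (0:ℝ) < A := by positivity
  have hS0 : (0:ℝ) < S := by exact_mod_cast hS
  have hC0 : (0:ℝ) < A.choose S := by
    have := Nat.choose_pos hSA
    positivity
  -- integrability of the q's
  have hqi : ∀ a, Integrable (q a) μ := by
    intro a
    by_contra h
    have := hq1 a
    rw [integral_undef h] at this
    norm_num at this
  -- the full mixture
  set f : Z → ℝ := fun z => (1 / (A : ℝ)) * ∑ a', q a' z with hfdef
  have hf0 : ∀ z, 0 < f z := by
    intro z
    apply mul_pos (by positivity)
    exact Finset.sum_pos (fun a _ => hq0 a z) ⟨⟨0, hA⟩, mem_univ _⟩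
  have hfi : Integrable f μ :=
    (integrable_finset_sum _ fun a _ => hqi a).const_mul _
  have hf1 : ∫ z, f z ∂μ = 1 := by
    rw [hfdef]
    rw [integral_const_mul, integral_finset_sum _ fun a _ => hqi a]
    simp only [hq1, Finset.sum_const, card_univ, Fintype.card_fin, nsmul_eq_mul, mul_one]
    field_simp
  -- Main per-subset analysis
  have key : ∀ Φ ∈ powersetCard S (univ : Finset (Fin A)),
      ∑ s ∈ Φ, ∫ z, q s z * Real.log (p z / ((1 / (S : ℝ)) * ∑ k ∈ Φ, q k z)) ∂μ
        ≤ ∑ s ∈ Φ, ∫ z, q s z * Real.log (p z / f z) ∂μ := by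
    intro Φ hΦ
    rw [mem_powersetCard] at hΦ
    have hΦcard : Φ.card = S := hΦ.2
    have hΦne : Φ.Nonempty := card_pos.1 (by omega)
    set g : Z → ℝ := fun z => (1 / (S : ℝ)) * ∑ k ∈ Φ, q k z with hgdef
    have hg0 : ∀ z, 0 < g z := by
      intro z
      apply mul_pos (by positivity)
      exact Finset.sum_pos (fun a _ => hq0 a z) hΦne
    have hgi : Integrable g μ :=
      (integrable_finset_sum _ fun a _ => hqi a).const_mul _
    have hg1 : ∫ z, g z ∂μ = 1 := by
      rw [hgdef]
      rw [integral_const_mul, integral_finset_sum _ fun a _ => hqi a]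
      simp only [hq1, Finset.sum_const, hΦcard, nsmul_eq_mul, mul_one]
      field_simp
    -- pointwise log decomposition
    have hlog : ∀ z, Real.log (p z / g z) = Real.log (p z / f z) + Real.log (f z / g z) := by
      intro z
      rw [Real.log_div (hp z).ne' (hg0 z).ne', Real.log_div (hp z).ne' (hf0 z).ne',
        Real.log_div (hf0 z).ne' (hg0 z).ne']
      ring
    -- integrability of the correction term
    have hJfun : ∀ s, (fun z => q s z * Real.log (f z / g z))
        = fun z => q s z * Real.log (p z / g z) - q s z * Real.log (p z / f z) := by
      intro s
      funext z
      rw [hlog z]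
      ring
    have hJint : ∀ s, Integrable (fun z => q s z * Real.log (f z / g z)) μ := by
      intro s
      rw [hJfun s]
      exact (hIntS Φ (mem_powersetCard.2 hΦ) s).sub (hIntA s)
    -- split each integral
    have hsplit : ∀ s, ∫ z, q s z * Real.log (p z / g z) ∂μ
        = ∫ z, q s z * Real.log (p z / f z) ∂μ
          + ∫ z, q s z * Real.log (f z / g z) ∂μ := by
      intro s
      have : (fun z => q s z * Real.log (p z / g z))
          = fun z => q s z * Real.log (p z / f z) + q s z * Real.log (f z / g z) := by
        funext z
        rw [hlog z]
        ring
      rw [this, integral_add (hIntA s) (hJint s)]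
    calc ∑ s ∈ Φ, ∫ z, q s z * Real.log (p z / g z) ∂μ
        = ∑ s ∈ Φ, ∫ z, q s z * Real.log (p z / f z) ∂μ
          + ∑ s ∈ Φ, ∫ z, q s z * Real.log (f z / g z) ∂μ := by
          rw [← Finset.sum_add_distrib]
          exact Finset.sum_congr rfl fun s _ => hsplit s
      _ ≤ ∑ s ∈ Φ, ∫ z, q s z * Real.log (p z / f z) ∂μ := by
          apply add_le_of_nonpos_right
          -- KL term
          have hEq : ∑ s ∈ Φ, ∫ z, q s z * Real.log (f z / g z) ∂μ
              = (S : ℝ) * ∫ z, g z * Real.log (f z / g z) ∂μ := by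
            rw [← integral_finset_sum _ fun s _ => hJint s, ← integral_const_mul]
            refine integral_congr_ae (Filter.Eventually.of_forall fun z => ?_)
            have hSg : (S : ℝ) * g z = ∑ k ∈ Φ, q k z := by
              simp only [hgdef]
              rw [← mul_assoc, mul_one_div_cancel hS0.ne', one_mul]
            simp only
            rw [← Finset.sum_mul, ← mul_assoc, hSg]
          rw [hEq]
          have hKLint : Integrable (fun z => g z * Real.log (f z / g z)) μ := by
            have heq : (fun z => g z * Real.log (f z / g z))
                = fun z => (1 / (S : ℝ)) * ∑ s ∈ Φ, q s z * Real.log (f z / g z) := by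
              funext z
              rw [← Finset.sum_mul, ← mul_assoc]
            rw [heq]
            exact (integrable_finset_sum _ fun s _ => hJint s).const_mul _
          have := aux_kl μ f g hf0 hg0 hfi hgi hf1 hg1 hKLint
          nlinarith
  -- assemble
  have step1 : ∑ Φ ∈ powersetCard S (univ : Finset (Fin A)),
        (1 / (A.choose S : ℝ)) * ((1 / (S : ℝ)) *
          ∑ s ∈ Φ, ∫ z, q s z * Real.log (p z / ((1 / (S : ℝ)) * ∑ k ∈ Φ, q k z)) ∂μ)
      ≤ ∑ Φ ∈ powersetCard S (univ : Finset (Fin A)),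
        (1 / (A.choose S : ℝ)) * ((1 / (S : ℝ)) *
          ∑ s ∈ Φ, ∫ z, q s z * Real.log (p z / f z) ∂μ) := by
    refine Finset.sum_le_sum fun Φ hΦ => ?_
    have := key Φ hΦ
    have h1 : (0:ℝ) ≤ 1 / (A.choose S : ℝ) := by positivity
    have h2 : (0:ℝ) ≤ 1 / (S : ℝ) := by positivity
    exact mul_le_mul_of_nonneg_left (mul_le_mul_of_nonneg_left this h2) h1
  refine le_trans step1 (le_of_eq ?_)
  -- combinatorial identity
  have hsum : ∑ Φ ∈ powersetCard S (univ : Finset (Fin A)),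
      ∑ s ∈ Φ, ∫ z, q s z * Real.log (p z / f z) ∂μ
        = ((A-1).choose (S-1) : ℝ) * ∑ a, ∫ z, q a z * Real.log (p z / f z) ∂μ :=
    aux_double_sum A S hS _
  have hchoose : (A : ℝ) * ((A-1).choose (S-1) : ℝ) = (A.choose S : ℝ) * S := by
    have h := Nat.add_one_mul_choose_eq (A-1) (S-1)
    have hA1 : A - 1 + 1 = A := by omega
    have hS1 : S - 1 + 1 = S := by omega
    rw [hA1, hS1] at h
    exact_mod_cast h
  have hcoef : (1 : ℝ) / ((A.choose S : ℝ) * S) * ((A-1).choose (S-1) : ℝ) = 1 / A := by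
    field_simp
    linarith [hchoose]
  have hRHSf : (1 / (A : ℝ)) * ∑ a,
        ∫ z, q a z * Real.log (p z / ((1 / (A : ℝ)) * ∑ a', q a' z)) ∂μ
      = (1 / (A : ℝ)) * ∑ a, ∫ z, q a z * Real.log (p z / f z) ∂μ := rfl
  rw [hRHSf]
  calc ∑ Φ ∈ powersetCard S (univ : Finset (Fin A)),
        (1 / (A.choose S : ℝ)) * ((1 / (S : ℝ)) *
          ∑ s ∈ Φ, ∫ z, q s z * Real.log (p z / f z) ∂μ)
      = ∑ Φ ∈ powersetCard S (univ : Finset (Fin A)),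
        (1 / ((A.choose S : ℝ) * S)) *
          (∑ s ∈ Φ, ∫ z, q s z * Real.log (p z / f z) ∂μ) :=
        Finset.sum_congr rfl fun _ _ => by ring
    _ = (1 / ((A.choose S : ℝ) * S)) * ∑ Φ ∈ powersetCard S (univ : Finset (Fin A)),
          ∑ s ∈ Φ, ∫ z, q s z * Real.log (p z / f z) ∂μ := (Finset.mul_sum _ _ _).symm
    _ = (1 / ((A.choose S : ℝ) * S)) * (((A-1).choose (S-1) : ℝ) *
          ∑ a, ∫ z, q a z * Real.log (p z / f z) ∂μ) := by rw [hsum]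
    _ = ((1 : ℝ) / ((A.choose S : ℝ) * S) * ((A-1).choose (S-1) : ℝ)) *
          ∑ a, ∫ z, q a z * Real.log (p z / f z) ∂μ := by ring
    _ = (1 / (A : ℝ)) * ∑ a, ∫ z, q a z * Real.log (p z / f z) ∂μ := by rw [hcoef]
end

section
/- The average of individual ELBOs is at most MISELBO: (1/A)∑_{a=1}^A E_{z∼q_{φ_a}}[log(p(x,z)/q_{φ_a}(z|x))] ≤ (1/A)∑_{a=1}^A E_{z∼q_{φ_a}}[log(p(x,z)/((1/A)∑_{a'} q_{φ_{a'}}(z|x)))], with the gap equal to (1/A)∑_a KL(q_{φ_a} ∥ (1/A)∑_{a'} q_{φ_{a'}}). -/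
open MeasureTheory Finset

/-- The average of the individual ELBOs is at most MISELBO, and the gap equals the
average KL divergence of the components from the uniform mixture. -/
theorem avg_elbo_le_miselbo
    {Z : Type*} [MeasurableSpace Z] (μ : Measure Z) [SigmaFinite μ]
    (A : ℕ) (hA : 0 < A)
    (p : Z → ℝ) (hp : ∀ z, 0 < p z)
    (q : Fin A → Z → ℝ)
    (hq0 : ∀ a z, 0 < q a z) (hq1 : ∀ a, ∫ z, q a z ∂μ = 1)
    (hIntE : ∀ a, Integrable (fun z => q a z * Real.log (p z / q a z)) μ)
    (hIntM : ∀ a, Integrable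
      (fun z => q a z * Real.log (p z / ((1 / (A : ℝ)) * ∑ a', q a' z))) μ)
    (hIntKL : ∀ a, Integrable
      (fun z => q a z * Real.log (q a z / ((1 / (A : ℝ)) * ∑ a', q a' z))) μ) :
    ((1 / (A : ℝ)) * ∑ a, ∫ z, q a z * Real.log (p z / q a z) ∂μ
        ≤ (1 / (A : ℝ)) * ∑ a,
            ∫ z, q a z * Real.log (p z / ((1 / (A : ℝ)) * ∑ a', q a' z)) ∂μ)
    ∧ (1 / (A : ℝ)) * ∑ a,
          ∫ z, q a z * Real.log (p z / ((1 / (A : ℝ)) * ∑ a', q a' z)) ∂μ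
        - (1 / (A : ℝ)) * ∑ a, ∫ z, q a z * Real.log (p z / q a z) ∂μ
      = (1 / (A : ℝ)) * ∑ a,
          ∫ z, q a z * Real.log (q a z / ((1 / (A : ℝ)) * ∑ a', q a' z)) ∂μ := by
  set m : Z → ℝ := fun z => (1 / (A : ℝ)) * ∑ a', q a' z with hm
  have hA' : (0 : ℝ) < (A : ℝ) := by exact_mod_cast hA
  have hm_pos : ∀ z, 0 < m z := by
    intro z
    apply mul_pos (by positivity)
    apply Finset.sum_pos (fun a _ => hq0 a z)
    exact Finset.univ_nonempty_iff.mpr ⟨⟨0, hA⟩⟩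
  have hInt_q : ∀ a, Integrable (q a) μ := by
    intro a
    by_contra h
    have h1 := hq1 a
    rw [integral_undef h] at h1
    exact one_ne_zero h1.symm
  have hInt_m : Integrable m μ := by
    have : Integrable (fun z => ∑ a', q a' z) μ :=
      integrable_finset_sum _ (fun a _ => hInt_q a)
    exact this.const_mul _
  have hm_int : ∫ z, m z ∂μ = 1 := by
    rw [hm]
    rw [integral_const_mul, integral_finset_sum _ (fun a _ => hInt_q a)]
    simp [hq1]
    field_simp
  -- KL nonnegativity
  have hKL : ∀ a, 0 ≤ ∫ z, q a z * Real.log (q a z / m z) ∂μ := by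
    intro a
    have key : ∫ z, -(q a z * Real.log (q a z / m z)) ∂μ ≤ ∫ z, m z - q a z ∂μ := by
      apply integral_mono ((hIntKL a).neg) (hInt_m.sub (hInt_q a))
      intro z
      simp only [Pi.neg_apply, Pi.sub_apply]
      have hq := hq0 a z
      have hmz := hm_pos z
      have h1 : -(q a z * Real.log (q a z / m z)) = q a z * Real.log (m z / q a z) := by
        rw [Real.log_div hmz.ne' hq.ne', Real.log_div hq.ne' hmz.ne']; ring
      rw [h1]
      calc q a z * Real.log (m z / q a z) ≤ q a z * (m z / q a z - 1) := by
            apply mul_le_mul_of_nonneg_left _ hq.le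
            exact Real.log_le_sub_one_of_pos (by positivity)
        _ = m z - q a z := by field_simp
    rw [integral_neg, integral_sub hInt_m (hInt_q a), hm_int, hq1 a] at key
    simpa using key
  -- pointwise decomposition
  have hdecomp : ∀ a, ∫ z, q a z * Real.log (p z / m z) ∂μ
      = ∫ z, q a z * Real.log (p z / q a z) ∂μ
        + ∫ z, q a z * Real.log (q a z / m z) ∂μ := by
    intro a
    rw [← integral_add (hIntE a) (hIntKL a)]
    apply integral_congr_ae
    filter_upwards with z
    have hq := hq0 a z
    have hmz := hm_pos z
    have hpz := hp z
    rw [Real.log_div hpz.ne' hmz.ne', Real.log_div hpz.ne' hq.ne',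
      Real.log_div hq.ne' hmz.ne']
    ring
  have heq : (1 / (A : ℝ)) * ∑ a, ∫ z, q a z * Real.log (p z / m z) ∂μ
        - (1 / (A : ℝ)) * ∑ a, ∫ z, q a z * Real.log (p z / q a z) ∂μ
      = (1 / (A : ℝ)) * ∑ a, ∫ z, q a z * Real.log (q a z / m z) ∂μ := by
    rw [← mul_sub, ← Finset.sum_sub_distrib]
    congr 1
    apply Finset.sum_congr rfl
    intro a _
    rw [hdecomp a]; ring
  refine ⟨?_, heq⟩
  have hnn : 0 ≤ (1 / (A : ℝ)) * ∑ a, ∫ z, q a z * Real.log (q a z / m z) ∂μ := by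
    apply mul_nonneg (by positivity)
    exact Finset.sum_nonneg (fun a _ => hKL a)
  linarith [heq, hnn]
end
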